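/- arXiv:math/0002217 — 8 statements merged into one kernel-verified Lean document; each statement's English description precedes it below -/
import Mathlib

section
/- Any semilocal ring has stable range 1: if R/rad(R) is semisimple, then whenever aR + bR = R there exists x in R such that a + bx is a unit of R. -/
/-!
Units lift modulo the Jacobson radical, so stable range 1 passes from `S ≅ R / rad R` to `R`.
A semisimple ring `S` is unit-regular: for `a ∈ S`, the kernel and the image of right
multiplication by `a` have isomorphic complements, by cancellation of simple summands and
induction on the length. This gives a unit `u` with `a * u * a = a`. In a unit-regular ring, if `a * x + b * y = 1`, then for the idempotent
`e = a * u` one gets `a + b * (y * (1 - e) * u⁻¹) = (1 + n) * u⁻¹` with `n = e * b * y * (1 - e)`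
of square zero.
-/

open Submodule LinearMap

section Development

variable {R : Type*} [Ring R]

section Cancellation

variable {M : Type*} [AddCommGroup M] [Module R M]

noncomputable def Submodule.prodEquivSupOfDisjoint {p q : Submodule R M} (h : Disjoint p q) :
    (p × q) ≃ₗ[R] ↥(p ⊔ q) :=
  .trans (.ofInjective (p.subtype.coprod q.subtype) (by
      rw [← ker_eq_bot, ker_coprod_of_disjoint_range, ker_subtype, ker_subtype, prod_bot]
      rwa [range_subtype, range_subtype]))
    (.ofEq _ _ (sup_eq_range p q).symm)

theorem IsSimpleModule.nonempty_linearEquiv_of_isCompl {P Q L K : Submodule R M}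
    [IsSimpleModule R K] (hPQ : IsCompl P Q) (hLK : IsCompl L K) (e : Q ≃ₗ[R] K) :
    Nonempty (P ≃ₗ[R] L) := by
  suffices ∃ C : Submodule R M, IsCompl C K ∧ Nonempty (P ≃ₗ[R] C) by
    obtain ⟨C, hCK, ⟨f⟩⟩ := this
    exact ⟨f ≪≫ₗ (quotientEquivOfIsCompl K C hCK.symm).symm ≪≫ₗ
      quotientEquivOfIsCompl K L hLK.symm⟩
  by_cases hKP : K ≤ P
  · -- `P = P₀ ⊕ K`; exchanging `K` for `Q ≅ K` gives the complement `P₀ ⊕ Q` of `K`.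
    let P₀ := P ⊓ L
    have hP₀K : Disjoint P₀ K := hLK.disjoint.mono_left inf_le_right
    have hP₀Q : Disjoint P₀ Q := hPQ.disjoint.mono_left inf_le_left
    have hP : P₀ ⊔ K = P := by rw [inf_sup_assoc_of_le L hKP, hLK.sup_eq_top, inf_top_eq]
    have hP₀QP : (P₀ ⊔ Q) ⊓ P = P₀ := by
      rw [sup_inf_assoc_of_le Q (inf_le_left : P₀ ≤ P), hPQ.symm.inf_eq_bot, sup_bot_eq]
    refine ⟨P₀ ⊔ Q, ⟨?_, ?_⟩, ⟨(LinearEquiv.ofEq _ _ hP).symm ≪≫ₗ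
      (prodEquivSupOfDisjoint hP₀K).symm ≪≫ₗ (LinearEquiv.refl R P₀).prodCongr e.symm ≪≫ₗ
      prodEquivSupOfDisjoint hP₀Q⟩⟩
    · rw [disjoint_iff_inf_le]
      calc (P₀ ⊔ Q) ⊓ K ≤ P₀ ⊓ K := le_inf ((inf_le_inf_left _ hKP).trans_eq hP₀QP) inf_le_right
        _ ≤ ⊥ := hP₀K.le_bot
    · rw [codisjoint_iff, sup_right_comm, hP, hPQ.sup_eq_top]
  · have hP : IsCoatom P := isSimpleModule_iff_isCoatom.mp
      (.congr (quotientEquivOfIsCompl P Q hPQ ≪≫ₗ e))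
    exact ⟨P, ⟨((isSimpleModule_iff_isAtom.mp ‹_›).not_le_iff_disjoint.mp hKP).symm,
      hP.not_le_iff_codisjoint.mp hKP⟩, ⟨.refl R P⟩⟩

variable {X Y : Type*} [AddCommGroup X] [Module R X] [AddCommGroup Y] [Module R Y]

theorem IsSimpleModule.nonempty_linearEquiv_of_prod {T : Type*} [AddCommGroup T] [Module R T]
    [IsSimpleModule R T] (F : (X × T) ≃ₗ[R] (Y × T)) : Nonempty (X ≃ₗ[R] Y) := by
  have : IsSimpleModule R (range (inr R Y T)) := .congr (.symm (.ofInjective _ inr_injective))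
  obtain ⟨f⟩ := nonempty_linearEquiv_of_isCompl
    (isCompl_range_inl_inr.map (orderIsoMapComap F)) isCompl_range_inl_inr
    ((F.submoduleMap _).symm ≪≫ₗ (LinearEquiv.ofInjective _ inr_injective).symm ≪≫ₗ
      .ofInjective _ inr_injective)
  exact ⟨.ofInjective _ inl_injective ≪≫ₗ F.submoduleMap _ ≪≫ₗ f ≪≫ₗ
    (LinearEquiv.ofInjective _ inl_injective).symm⟩

theorem IsSemisimpleModule.nonempty_linearEquiv_of_prod {Z : Type*} [AddCommGroup Z]
    [Module R Z] [IsSemisimpleModule R Z] [IsArtinian R Z] (F : (X × Z) ≃ₗ[R] (Y × Z)) :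
    Nonempty (X ≃ₗ[R] Y) := by
  suffices ∀ W : Submodule R Z, Nonempty ((X × W) ≃ₗ[R] (Y × W)) → Nonempty (X ≃ₗ[R] Y) from
    this ⊤ ⟨(LinearEquiv.refl R X).prodCongr topEquiv ≪≫ₗ F ≪≫ₗ
      (LinearEquiv.refl R Y).prodCongr topEquiv.symm⟩
  intro W
  induction W using WellFoundedLT.induction with | _ W ih
  rintro ⟨F⟩
  rcases IsSemisimpleModule.eq_bot_or_exists_simple_le W with rfl | ⟨T, hTW, hT⟩
  · exact ⟨LinearEquiv.prodUnique.symm ≪≫ₗ F ≪≫ₗ LinearEquiv.prodUnique⟩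
  obtain ⟨W₀, hTW₀, hW⟩ := IsModularLattice.exists_disjoint_and_sup_eq hTW
  have hW₀ : W₀ < W := hW ▸ right_lt_sup.mpr fun h ↦
    (isSimpleModule_iff_isAtom.mp hT).1 (hTW₀.eq_bot_of_le h)
  let eW : (W₀ × T) ≃ₗ[R] W :=
    LinearEquiv.prodComm R _ _ ≪≫ₗ prodEquivSupOfDisjoint hTW₀ ≪≫ₗ .ofEq _ _ hW
  exact ih W₀ hW₀ (IsSimpleModule.nonempty_linearEquiv_of_prod
    (LinearEquiv.prodAssoc R X W₀ T ≪≫ₗ (LinearEquiv.refl R X).prodCongr eW ≪≫ₗ F ≪≫ₗ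
      ((LinearEquiv.prodAssoc R Y W₀ T ≪≫ₗ (LinearEquiv.refl R Y).prodCongr eW).symm)))

end Cancellation

theorem Module.End.exists_isUnit_mul_mul_eq {M : Type*} [AddCommGroup M] [Module R M]
    [IsSemisimpleModule R M] [IsArtinian R M] (φ : Module.End R M) :
    ∃ ψ : Module.End R M, IsUnit ψ ∧ φ * ψ * φ = φ := by
  obtain ⟨A, hA⟩ := exists_isCompl (ker φ)
  obtain ⟨B, hB⟩ := exists_isCompl (range φ)
  let eA : A ≃ₗ[R] range φ := (quotientEquivOfIsCompl _ _ hA).symm ≪≫ₗ φ.quotKerEquivRange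
  have heA (x : A) : (eA x : M) = φ x := by
    simp [eA, quotientEquivOfIsCompl_symm_apply]
  obtain ⟨g⟩ : Nonempty (B ≃ₗ[R] ker φ) := IsSemisimpleModule.nonempty_linearEquiv_of_prod
    (prodEquivOfIsCompl B (range φ) hB.symm ≪≫ₗ (prodEquivOfIsCompl (ker φ) A hA).symm ≪≫ₗ
      (LinearEquiv.refl R _).prodCongr eA)
  let ψ : M ≃ₗ[R] M := (prodEquivOfIsCompl _ _ hB).symm ≪≫ₗ eA.symm.prodCongr g ≪≫ₗ
    prodEquivOfIsCompl _ _ hA.symm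
  refine ⟨ψ, (Module.End.isUnit_iff _).2 ψ.bijective, LinearMap.ext fun x ↦ ?_⟩
  have hψ : ψ (φ x) = eA.symm ⟨φ x, mem_range_self φ x⟩ := by
    simp [ψ, prodEquivOfIsCompl_symm_apply_left _ _ hB ⟨φ x, mem_range_self φ x⟩]
  simp [hψ, ← heA]

theorem IsSemisimpleRing.exists_isUnit_mul_mul_eq [IsSemisimpleRing R] (a : R) :
    ∃ u, IsUnit u ∧ a * u * a = a := by
  let e := RingEquiv.moduleEndSelf R
  obtain ⟨ψ, hψ, h⟩ := Module.End.exists_isUnit_mul_mul_eq (e (.op a))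
  refine ⟨(e.symm ψ).unop, (hψ.map e.symm).unop, MulOpposite.op_injective (e.injective ?_)⟩
  simpa [mul_assoc] using h

def HasStableRangeOne (R : Type*) [Ring R] : Prop :=
  ∀ a b : R, (∃ x y : R, a * x + b * y = 1) → ∃ x : R, IsUnit (a + b * x)

theorem hasStableRangeOne_of_exists_isUnit_mul_mul_eq
    (h : ∀ a : R, ∃ u, IsUnit u ∧ a * u * a = a) : HasStableRangeOne R := by
  rintro a b ⟨x, y, hxy⟩
  obtain ⟨_, ⟨u, rfl⟩, hu⟩ := h a
  let e := a * u
  have hea : e * a = a := hu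
  have hee : e * e = e := by simp only [e, ← mul_assoc, hu]
  have hby : (1 - e) * (b * y) = 1 - e := by
    rw [eq_sub_of_add_eq' hxy, mul_sub, mul_one, ← mul_assoc, sub_mul, one_mul, hea, sub_self,
      zero_mul, sub_zero]
  have horth : (1 - e) * e = 0 := by rw [sub_mul, one_mul, hee, sub_self]
  let n := e * (b * y) * (1 - e)
  have hn : IsNilpotent n := ⟨2, by
    calc n ^ 2 = e * (b * y) * ((1 - e) * e) * (b * y) * (1 - e) := by simp only [n]; noncomm_ring
      _ = 0 := by rw [horth, mul_zero, zero_mul, zero_mul]⟩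
  have key : b * y * (1 - e) = n + (1 - e) := by
    calc b * y * (1 - e) = e * (b * y) * (1 - e) + (1 - e) * (b * y) * (1 - e) := by noncomm_ring
      _ = n + (1 - e) := by rw [hby, mul_sub (1 - e), mul_one, horth, sub_zero]
  refine ⟨y * (1 - e) * ↑u⁻¹, ?_⟩
  have hunit : a + b * (y * (1 - e) * ↑u⁻¹) = (1 + n) * ↑u⁻¹ := by
    calc a + b * (y * (1 - e) * ↑u⁻¹) = (e + b * y * (1 - e)) * ↑u⁻¹ := by
          simp only [e, add_mul, mul_assoc, Units.mul_inv, mul_one]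
      _ = (1 + n) * ↑u⁻¹ := by rw [key]; noncomm_ring
  rw [hunit]
  exact hn.isUnit_one_add.mul u⁻¹.isUnit

theorem IsSemisimpleRing.hasStableRangeOne [IsSemisimpleRing R] : HasStableRangeOne R :=
  hasStableRangeOne_of_exists_isUnit_mul_mul_eq exists_isUnit_mul_mul_eq

section Lifting

variable {S : Type*} [Ring S] {f : R →+* S}

theorem exists_mul_eq_one_of_isUnit_map (hf : Function.Surjective f)
    (hker : RingHom.ker f ≤ Ideal.jacobson ⊥) {v : R} (hv : IsUnit (f v)) : ∃ l, l * v = 1 := by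
  obtain ⟨w, hw⟩ := hf ↑hv.unit⁻¹
  have hwv : w * v - 1 ∈ Ideal.jacobson ⊥ := hker (by simp [RingHom.mem_ker, hw])
  obtain ⟨s, hs⟩ := Ideal.exists_mul_sub_mem_of_sub_one_mem_jacobson _ hwv
  exact ⟨s * w, by rwa [Ideal.mem_bot, sub_eq_zero, ← mul_assoc] at hs⟩

theorem isLocalHom_of_ker_le_jacobson (hf : Function.Surjective f)
    (hker : RingHom.ker f ≤ Ideal.jacobson ⊥) : IsLocalHom f where
  map_nonunit v hv := by
    obtain ⟨l, hl⟩ := exists_mul_eq_one_of_isUnit_map hf hker hv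
    have hfl : f l = ↑hv.unit⁻¹ :=
      Units.mul_eq_one_iff_eq_inv.mp (by rw [IsUnit.unit_spec, ← map_mul, hl, map_one])
    obtain ⟨l', hl'⟩ := exists_mul_eq_one_of_isUnit_map hf hker (hfl ▸ Units.isUnit _)
    have hl'v : l' = v := by
      calc l' = l' * (l * v) := by rw [hl, mul_one]
        _ = v := by rw [← mul_assoc, hl', one_mul]
    exact isUnit_iff_exists.mpr ⟨l, hl'v ▸ hl', hl⟩

theorem HasStableRangeOne.of_surjective [IsLocalHom f] (hf : Function.Surjective f)
    (hS : HasStableRangeOne S) : HasStableRangeOne R := by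
  rintro a b ⟨x, y, h⟩
  obtain ⟨z', hz'⟩ := hS (f a) (f b) ⟨f x, f y, by simp [← map_mul, ← map_add, h]⟩
  obtain ⟨z, rfl⟩ := hf z'
  exact ⟨z, (isUnit_map_iff f _).mp (by simpa using hz')⟩

end Lifting

end Development

/-- Any semilocal ring (i.e. `R / rad R` is semisimple) has stable range 1. -/
theorem semilocal_stableRange1 (R S : Type*) [Ring R] [Ring S] [IsSemisimpleRing S]
    (f : R →+* S) (hf : Function.Surjective f)
    (hker : ∀ a : R, f a = 0 ↔ a ∈ Ideal.jacobson (⊥ : Ideal R)) :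
    ∀ a b : R, (∃ x y : R, a * x + b * y = 1) → ∃ x : R, IsUnit (a + b * x) := by
  have : IsLocalHom f := isLocalHom_of_ker_le_jacobson hf fun a ha ↦ (hker a).mp ha
  exact HasStableRangeOne.of_surjective hf IsSemisimpleRing.hasStableRangeOne
end

section
/- Every nonzero projective module P over any ring R has a maximal submodule; more precisely, rad(R)·P = rad(P) ≠ P, where rad(P) is the intersection of all maximal submodules of P. -/
/-!
A projective module `P` has a dual basis `s : P →ₗ[R] (P →₀ R)` with `x = ∑ p, s x p • p`, and
every functional maps `rad P` into `rad R`; hence `rad P ≤ rad(R) • P`, the other inclusion holding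
in every module. If `rad P = P`, all entries `s p q` lie in `rad R`, and applying `s` to
`x = ∑ p, s x p • p` shows that the row vector `s x` is fixed by right multiplication with a matrix
over `rad R`. Nakayama's lemma for the finitely generated right ideal spanned by the entries of
`s x` forces `s x = 0`, so `x = 0`.
-/

open MulOpposite

namespace Ring

variable {R : Type*} [Ring R]

theorem exists_mul_one_add_eq_one_of_mem_jacobson {j : R} (hj : j ∈ jacobson R) :
    ∃ z, z * (1 + j) = 1 := by
  rw [← Ideal.jacobson_bot] at hj
  obtain ⟨z, hz⟩ := Ideal.mem_jacobson_iff.mp hj 1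
  refine ⟨z, ?_⟩
  rw [Submodule.mem_bot, mul_one, sub_eq_zero] at hz
  rwa [mul_add, mul_one, add_comm]

theorem isUnit_one_add_of_mem_jacobson {j : R} (hj : j ∈ jacobson R) : IsUnit (1 + j) := by
  obtain ⟨z, hz⟩ := exists_mul_one_add_eq_one_of_mem_jacobson hj
  -- `z = 1 - z * j` has a left inverse as well, which must then be `1 + j`
  have hz' : z = 1 + -(z * j) := by rw [← hz]; noncomm_ring
  obtain ⟨w, hw⟩ :=
    exists_mul_one_add_eq_one_of_mem_jacobson (neg_mem ((jacobson R).mul_mem_left z hj))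
  rw [← hz'] at hw
  have hw' : w = 1 + j := by
    calc w = w * (z * (1 + j)) := by rw [hz, mul_one]
      _ = 1 + j := by rw [← mul_assoc, hw, one_mul]
  exact isUnit_iff_exists.mpr ⟨z, hw' ▸ hw, hz⟩

theorem op_mem_jacobson {c : R} (hc : c ∈ jacobson R) : op c ∈ jacobson Rᵐᵒᵖ := by
  rw [← Ideal.jacobson_bot, Ideal.mem_jacobson_iff]
  intro y
  obtain ⟨u, hu⟩ := isUnit_one_add_of_mem_jacobson ((jacobson R).mul_mem_right (unop y) hc)
  refine ⟨op (↑u⁻¹ : R), (Submodule.mem_bot _).mpr (unop_injective ?_)⟩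
  simp only [unop_sub, unop_add, unop_mul, unop_op, unop_one, unop_zero]
  rw [← mul_assoc, ← add_one_mul, add_comm, ← hu, u.mul_inv, sub_self]

end Ring

namespace Finsupp

variable {R : Type*} [Ring R]

theorem eq_zero_of_eq_sum_mul_mem_jacobson {ι : Type*} (a : ι →₀ R) (c : ι → ι → R)
    (hc : ∀ i j, c i j ∈ Ring.jacobson R) (h : ∀ j, a j = a.sum fun i r => r * c i j) :
    a = 0 := by
  classical
  -- the right ideal generated by the entries of `a` is a submodule of `R` over `Rᵐᵒᵖ`
  let N : Submodule Rᵐᵒᵖ R := Submodule.span Rᵐᵒᵖ (a.support.image a : Set R)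
  have haN : ∀ i, a i ∈ N := fun i => by
    by_cases hi : a i = 0
    · rw [hi]; exact N.zero_mem
    · exact Submodule.subset_span (Finset.mem_coe.mpr
        (Finset.mem_image_of_mem _ (mem_support_iff.mpr hi)))
  have hle : N ≤ Ring.jacobson Rᵐᵒᵖ • N := by
    refine Submodule.span_le.mpr fun _ hr => ?_
    obtain ⟨j, -, rfl⟩ := Finset.mem_image.mp (Finset.mem_coe.mp hr)
    rw [SetLike.mem_coe, h j]
    refine Submodule.sum_mem _ fun i _ => ?_
    simpa only [op_smul_eq_mul] using
      Submodule.smul_mem_smul (Ring.op_mem_jacobson (hc i j)) (haN i)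
  have hN : N = ⊥ :=
    Submodule.FG.eq_bot_of_le_jacobson_smul (Submodule.fg_span (Finset.finite_toSet _)) hle
  ext i
  simpa [hN] using haN i

end Finsupp

namespace Module.Projective

variable {R : Type*} [Ring R] {P : Type*} [AddCommGroup P] [Module R P] [Module.Projective R P]

theorem jacobson_le_jacobson_smul_top : jacobson R P ≤ Ring.jacobson R • (⊤ : Submodule R P) := by
  obtain ⟨s, hs⟩ := Module.projective_def.mp ‹Module.Projective R P›
  intro x hx
  rw [← hs x, Finsupp.linearCombination_apply]
  exact Submodule.sum_mem _ fun p _ => Submodule.smul_mem_smul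
    (le_comap_jacobson (Finsupp.lapply p ∘ₗ s) hx) Submodule.mem_top

theorem jacobson_ne_top [Nontrivial P] : jacobson R P ≠ ⊤ := by
  obtain ⟨s, hs⟩ := Module.projective_def.mp ‹Module.Projective R P›
  intro htop
  obtain ⟨x, hx⟩ := exists_ne (0 : P)
  -- applying `s` to `x = ∑ p, s x p • p` gives the row-vector relation `s x = (s x) * (s p q)`
  have hrel : ∀ q, s x q = (s x).sum fun p r => r * s p q := by
    intro q
    conv_lhs => rw [← hs x, Finsupp.linearCombination_apply, map_finsuppSum, Finsupp.sum_apply]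
    simp only [map_smul, Finsupp.smul_apply, smul_eq_mul, id]
  have hcoeff : ∀ p q, s p q ∈ Ring.jacobson R := fun p q =>
    le_comap_jacobson (Finsupp.lapply q ∘ₗ s) (htop ▸ Submodule.mem_top)
  apply hx
  rw [← hs x, Finsupp.eq_zero_of_eq_sum_mul_mem_jacobson _ _ hcoeff hrel, map_zero]

end Module.Projective

/-- Every nonzero projective module has a maximal submodule; more precisely
`rad(R) • P = rad(P) ≠ P`, where `rad(P)` is the intersection of all maximal submodules. -/
theorem projective_radical (R : Type*) [Ring R] (P : Type*) [AddCommGroup P] [Module R P]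
    [Nontrivial P] [Module.Projective R P] :
    (Ideal.jacobson (⊥ : Ideal R)) • (⊤ : Submodule R P)
        = sInf {m : Submodule R P | IsCoatom m} ∧
      sInf {m : Submodule R P | IsCoatom m} ≠ ⊤ := by
  rw [Ideal.jacobson_bot]
  exact ⟨le_antisymm (Ring.jacobson_smul_top_le R P)
    Module.Projective.jacobson_le_jacobson_smul_top, Module.Projective.jacobson_ne_top⟩
end

section
/- If every ideal of a commutative Noetherian integral domain R (which is not a field) can be generated by two elements, then R has Krull dimension at most 1. -/
/-!
Localize at a maximal ideal `m = (a, b)`. Since `m²` is also generated by two elements, the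
three monomials `a², ab, b²` are linearly dependent modulo `m³` over the residue field; after a
change of generators this gives `a² ∈ (b) + m³`, hence `m² ⊆ (b)` by Nakayama. So `m` is minimal
over the principal ideal `(b)`, and Krull's principal ideal theorem bounds its height by `1`.
-/

open Ideal IsLocalRing

theorem IsLocalRing.exists_isUnit_and_sum_mul_mem_maximalIdeal_mul
    {A ι κ : Type*} [CommRing A] [IsLocalRing A] [Fintype ι] [Fintype κ]
    (hcard : Fintype.card κ < Fintype.card ι) (c : κ → A) (x : ι → A)
    (hx : ∀ i, x i ∈ span (Set.range c)) :
    ∃ l : ι → A, (∃ i, IsUnit (l i)) ∧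
      ∑ i, l i * x i ∈ maximalIdeal A * span (Set.range c) := by
  choose y hy using fun i ↦ mem_span_range_iff_exists_fun.mp (hx i)
  have hdep : ¬ LinearIndependent (ResidueField A) fun i j ↦ residue A (y i j) := fun hli ↦ by
    simpa [hcard.not_ge] using hli.fintype_card_le_finrank
  obtain ⟨g, hg, i, hgi⟩ := Fintype.not_linearIndependent_iff.mp hdep
  choose l hl using fun i ↦ residue_surjective (g i)
  refine ⟨l, ⟨i, (residue_ne_zero_iff_isUnit _).mp (hl i ▸ hgi)⟩, ?_⟩
  have hcoeff : ∀ j, ∑ i, l i * y i j ∈ maximalIdeal A := fun j ↦ by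
    rw [← residue_eq_zero_iff, map_sum]
    simpa [← hl] using congr_fun hg j
  have hsum : ∑ i, l i * x i = ∑ j, (∑ i, l i * y i j) * c j := by
    simp only [← hy, Finset.mul_sum, Finset.sum_mul, mul_assoc]
    exact Finset.sum_comm
  rw [hsum]
  exact sum_mem fun j _ ↦ mul_mem_mul (hcoeff j) (subset_span ⟨j, rfl⟩)

lemma Ideal.mul_self_mem_span_singleton_sup_of_isUnit {R : Type*} [CommRing R] {J : Ideal R}
    {a b u v w : R} (hu : IsUnit u) (h : u * (a * a) + v * (a * b) + w * (b * b) ∈ J) :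
    a * a ∈ span {b} ⊔ J := by
  obtain ⟨u, rfl⟩ := hu
  have hrw : a * a = ↑u⁻¹ * (u * (a * a) + v * (a * b) + w * (b * b))
      - ↑u⁻¹ * (v * a + w * b) * b := by
    linear_combination (-(a * a)) * u.inv_mul
  rw [hrw]
  exact sub_mem (mem_sup_right (mul_mem_left _ _ h))
    (mem_sup_left (mem_span_singleton.mpr (dvd_mul_left _ _)))

lemma IsLocalization.exists_span_pair_eq {R S : Type*} [CommRing R] [CommRing S] [Algebra R S]
    (M : Submonoid R) [IsLocalization M S] (h : ∀ I : Ideal R, ∃ a b : R, I = span {a, b})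
    (J : Ideal S) : ∃ a b : S, J = span {a, b} := by
  obtain ⟨a, b, hab⟩ := h (J.comap (algebraMap R S))
  refine ⟨algebraMap R S a, algebraMap R S b, ?_⟩
  rw [← IsLocalization.map_under M S J, under_def, hab, map_span, Set.image_pair]

namespace IsLocalRing

variable {A : Type*} [CommRing A] [IsLocalRing A] [IsNoetherianRing A]

lemma mul_self_maximalIdeal_le_span_singleton {a b : A} (hm : maximalIdeal A = span {a, b})
    (ha : a * a ∈ span {b} ⊔ maximalIdeal A * (maximalIdeal A * maximalIdeal A)) :
    maximalIdeal A * maximalIdeal A ≤ span {b} := by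
  refine Submodule.le_of_le_smul_of_le_jacobson_bot (IsNoetherian.noetherian _)
    (jacobson_eq_maximalIdeal ⊥ bot_ne_top).ge ?_
  rw [smul_eq_mul, mul_le]
  intro x hx y hy
  rw [hm, mem_span_pair] at hx hy
  obtain ⟨r, s, rfl⟩ := hx
  obtain ⟨r', s', rfl⟩ := hy
  have hrw : (r * a + s * b) * (r' * a + s' * b)
      = r * r' * (a * a) + (r * s' * a + s * (r' * a + s' * b)) * b := by ring
  rw [hrw]
  exact add_mem (mul_mem_left _ _ ha) (mem_sup_left (mem_span_singleton.mpr (dvd_mul_left _ _)))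

/-- A nonzero quadratic form over the residue field takes a nonzero value at one of
`(1, 0)`, `(0, 1)`, `(1, -1)`; accordingly one of `(a, b)`, `(b, a)`, `(a, b + a)` works. -/
lemma exists_maximalIdeal_eq_span_pair_and_mul_self_le_span_singleton {a b c d : A}
    (hm : maximalIdeal A = span {a, b}) (hm2 : maximalIdeal A * maximalIdeal A = span {c, d}) :
    ∃ a' b' : A, maximalIdeal A = span {a', b'} ∧ maximalIdeal A * maximalIdeal A ≤ span {b'} := by
  set m := maximalIdeal A
  have hrange : span (Set.range ![c, d]) = m * m := by
    rw [hm2, Matrix.range_cons, Matrix.range_cons, Matrix.range_empty, Set.union_empty,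
      Set.singleton_union]
  have ha : a ∈ m := hm ▸ subset_span (by simp)
  have hb : b ∈ m := hm ▸ subset_span (by simp)
  obtain ⟨l, hunit, hrel⟩ := exists_isUnit_and_sum_mul_mem_maximalIdeal_mul (by simp) ![c, d]
    ![a * a, a * b, b * b] fun i ↦ by
      rw [hrange]
      fin_cases i
      exacts [mul_mem_mul ha ha, mul_mem_mul ha hb, mul_mem_mul hb hb]
  rw [hrange, Fin.sum_univ_three] at hrel
  simp only [Matrix.cons_val] at hrel
  have hcases : IsUnit (l 0) ∨ IsUnit (l 2) ∨ IsUnit (l 0 - l 1 + l 2) := by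
    by_contra! hnon
    simp only [← mem_nonunits_iff, ← mem_maximalIdeal] at hnon
    obtain ⟨h0, h2, h1⟩ := hnon
    obtain ⟨i, hi⟩ := hunit
    refine (mem_maximalIdeal _).mp ?_ hi
    fin_cases i
    · exact h0
    · simpa using sub_mem (add_mem h0 h2) h1
    · exact h2
  rcases hcases with h0 | h2 | h1
  · exact ⟨a, b, hm, mul_self_maximalIdeal_le_span_singleton hm
      (mul_self_mem_span_singleton_sup_of_isUnit h0 hrel)⟩
  · rw [span_pair_comm] at hm
    refine ⟨b, a, hm, mul_self_maximalIdeal_le_span_singleton hm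
      (mul_self_mem_span_singleton_sup_of_isUnit (v := l 1) (w := l 0) h2 ?_)⟩
    convert hrel using 1
    ring
  · rw [← span_pair_add_left] at hm
    refine ⟨a, b + a, hm, mul_self_maximalIdeal_le_span_singleton hm
      (mul_self_mem_span_singleton_sup_of_isUnit (v := l 1 - 2 * l 2) (w := l 2) h1 ?_)⟩
    convert hrel using 1
    ring

lemma ringKrullDim_le_one_of_mul_self_le_span_singleton {b : A} (hb : b ∈ maximalIdeal A)
    (h : maximalIdeal A * maximalIdeal A ≤ span {b}) : ringKrullDim A ≤ 1 := by
  have hmin : maximalIdeal A ∈ (span {b}).minimalPrimes :=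
    ⟨⟨inferInstance, span_le.mpr (by simpa)⟩, fun q ⟨hq, hbq⟩ _ ↦
      (hq.mul_le.mp (h.trans hbq)).elim id id⟩
  rw [← maximalIdeal_height_eq_ringKrullDim]
  exact_mod_cast height_le_one_of_isPrincipal_of_mem_minimalPrimes _ _ hmin

lemma ringKrullDim_le_one_of_forall_span_pair (h : ∀ I : Ideal A, ∃ a b : A, I = span {a, b}) :
    ringKrullDim A ≤ 1 := by
  obtain ⟨a, b, hm⟩ := h (maximalIdeal A)
  obtain ⟨c, d, hm2⟩ := h (maximalIdeal A * maximalIdeal A)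
  obtain ⟨a', b', hm', hle⟩ :=
    exists_maximalIdeal_eq_span_pair_and_mul_self_le_span_singleton hm hm2
  exact ringKrullDim_le_one_of_mul_self_le_span_singleton (hm' ▸ subset_span (by simp)) hle

end IsLocalRing

theorem krullDim_le_one_of_two_generated_general (R : Type*) [CommRing R]
    [IsNoetherianRing R]
    (h : ∀ I : Ideal R, ∃ a b : R, I = Ideal.span {a, b}) :
    ringKrullDim R ≤ 1 := by
  refine (ringKrullDim_le_iff_isMaximal_height_le 1).mpr fun M hM ↦ ?_
  rw [← IsLocalization.AtPrime.ringKrullDim_eq_height M (Localization.AtPrime M)]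
  exact IsLocalRing.ringKrullDim_le_one_of_forall_span_pair
    (IsLocalization.exists_span_pair_eq (S := Localization.AtPrime M) M.primeCompl h)

/-- If every ideal of a commutative Noetherian domain (not a field) is generated by two
elements, then the Krull dimension of the ring is at most 1. -/
theorem krullDim_le_one_of_two_generated (R : Type*) [CommRing R] [IsDomain R]
    [IsNoetherianRing R] (hnf : ¬ IsField R)
    (h : ∀ I : Ideal R, ∃ a b : R, I = Ideal.span {a, b}) :
    ringKrullDim R ≤ 1 :=
  krullDim_le_one_of_two_generated_general R h
end

section
/- If the endomorphism ring of a right R-module M has stable range 1, then M is cancellable: for all right R-modules P and Q, M ⊕ P ≅ M ⊕ Q implies P ≅ Q. -/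
/-!
Write `f : M × P ≃ M × Q` in blocks: `(f (m, p)).1 = a m + g p` and `f⁻¹ (m, 0) = (x m, y m)`,
so that `a x + g y = 1`. Stable range 1 gives `z` with `a + g y z` a unit, and this is the
`M`-corner of `f` precomposed with the shear `(m, p) ↦ (m, p + y z m)`. An isomorphism whose
`M`-corner `u` is invertible agrees in the first coordinate with the automorphism
`(m, p) ↦ (u m + g p, p)` of `M × P`; composing with its inverse gives an isomorphism fixing the
first coordinate, which therefore restricts to `P ≃ Q`.
-/

universe u

open LinearMap

variable {R M P Q : Type*}

namespace LinearEquiv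

section Semiring

variable [Semiring R] [AddCommMonoid M] [AddCommMonoid P] [AddCommMonoid Q]
  [Module R M] [Module R P] [Module R Q]

def sndOfFstEq (F : (M × P) ≃ₗ[R] (M × Q)) (hF : ∀ w, (F w).1 = w.1) : P ≃ₗ[R] Q :=
  have hF' : ∀ w, (F.symm w).1 = w.1 := fun w => by simpa using (hF (F.symm w)).symm
  ofLinearMap (snd R M Q ∘ₗ F.toLinearMap ∘ₗ inr R M P)
    (snd R M P ∘ₗ F.symm.toLinearMap ∘ₗ inr R M Q)
    (LinearMap.ext fun q => by
      have : ((0 : M), (F.symm (0, q)).2) = F.symm (0, q) := Prod.ext (hF' (0, q)).symm rfl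
      simp [this])
    (LinearMap.ext fun p => by
      have : ((0 : M), (F (0, p)).2) = F (0, p) := Prod.ext (hF (0, p)).symm rfl
      simp [this])

theorem fst_apply_eq_add (f : (M × P) ≃ₗ[R] (M × Q)) (w : M × P) :
    (f w).1 = (fst R M Q ∘ₗ f.toLinearMap ∘ₗ inl R M P) w.1 +
      (fst R M Q ∘ₗ f.toLinearMap ∘ₗ inr R M P) w.2 := by
  simp [← Prod.fst_add, ← map_add]

theorem fst_comp_comp_inl_mul_add_eq_one (f : (M × P) ≃ₗ[R] (M × Q)) :
    (fst R M Q ∘ₗ f.toLinearMap ∘ₗ inl R M P) *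
        (fst R M P ∘ₗ f.symm.toLinearMap ∘ₗ inl R M Q) +
      (fst R M Q ∘ₗ f.toLinearMap ∘ₗ inr R M P) ∘ₗ
        (snd R M P ∘ₗ f.symm.toLinearMap ∘ₗ inl R M Q) = 1 := by
  ext m
  have := congr_arg Prod.fst (f.apply_symm_apply (m, 0))
  rw [fst_apply_eq_add f] at this
  simpa using this

end Semiring

section Ring

variable [Ring R] [AddCommGroup M] [AddCommGroup P] [AddCommGroup Q]
  [Module R M] [Module R P] [Module R Q]

theorem fst_comp_trans_skewProd_comp_inl (f : (M × P) ≃ₗ[R] (M × Q)) (s : M →ₗ[R] P) :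
    fst R M Q ∘ₗ (((refl R M).skewProd (refl R P) s).trans f).toLinearMap ∘ₗ inl R M P =
      fst R M Q ∘ₗ f.toLinearMap ∘ₗ inl R M P +
        (fst R M Q ∘ₗ f.toLinearMap ∘ₗ inr R M P) ∘ₗ s := by
  ext m
  rw [LinearMap.comp_apply, LinearMap.comp_apply, coe_coe, trans_apply, fst_apply,
    fst_apply_eq_add f]
  simp

theorem nonempty_of_isUnit_fst_comp_comp_inl (f : (M × P) ≃ₗ[R] (M × Q))
    (hf : IsUnit (fst R M Q ∘ₗ f.toLinearMap ∘ₗ inl R M P)) : Nonempty (P ≃ₗ[R] Q) := by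
  obtain ⟨u, hu⟩ := hf
  -- `e (m, p) = (u m + g p, p)`, where `g` is the `P → M` corner of `f`
  let e : (M × P) ≃ₗ[R] (M × P) := ((prodComm R M P).trans ((refl R P).skewProd
    (GeneralLinearGroup.toLinearEquiv u) (fst R M Q ∘ₗ f.toLinearMap ∘ₗ inr R M P))).trans
    (prodComm R P M)
  have fst_f : ∀ v, (f v).1 = (e v).1 := fun v => by
    rw [fst_apply_eq_add f]
    simp [e, ← hu]
  exact ⟨sndOfFstEq (e.symm.trans f) fun w => by simpa using fst_f (e.symm w)⟩

end Ring

end LinearEquiv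

/-- Evans's cancellation theorem: if `End_R M` has stable range 1 then `M` is cancellable. -/
theorem evans_cancellation (R : Type u) [Ring R] (M : Type u) [AddCommGroup M] [Module R M]
    (h : ∀ a b : Module.End R M, (∃ x y : Module.End R M, a * x + b * y = 1) →
      ∃ x : Module.End R M, IsUnit (a + b * x)) :
    ∀ (P Q : Type u) [AddCommGroup P] [Module R P] [AddCommGroup Q] [Module R Q],
      Nonempty ((M × P) ≃ₗ[R] (M × Q)) → Nonempty (P ≃ₗ[R] Q) := by
  rintro P Q _ _ _ _ ⟨f⟩
  obtain ⟨z, hz⟩ := h _ _ ⟨_, 1, by simpa using f.fst_comp_comp_inl_mul_add_eq_one⟩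
  let shear := (LinearEquiv.refl R M).skewProd (.refl R P)
    ((snd R M P ∘ₗ f.symm.toLinearMap ∘ₗ inl R M Q) ∘ₗ z)
  refine (shear.trans f).nonempty_of_isUnit_fst_comp_comp_inl ?_
  rwa [LinearEquiv.fst_comp_trans_skewProd_comp_inl, ← LinearMap.comp_assoc]
end

section
/- A von Neumann regular ring R is unit-regular if and only if for all x, y in R, xR ≅ yR as right R-modules implies R/xR ≅ R/yR as right R-modules. -/
/-!
Every principal right ideal of a regular ring is `eR` for an idempotent `e`, and an isomorphism
`eR ≅ fR` of such ideals is left multiplication by some `a ∈ fRe` with an inverse `b ∈ eRf`, so that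
`ba = e` and `ab = f`.

If `a = aua` with `u` a unit, left multiplication by `u(1 - au) = (1 - ua)u` has kernel `aR` and
image the right annihilator of `a`, so `R/aR` is isomorphic to that annihilator. For `a` as above the
annihilator is `(1 - e)R ≅ R/eR` and `aR = fR`, hence `R/eR ≅ R/fR`.

Conversely, let `a = aba` with `b = bab`. Since `aR ≅ baR`, cancellation gives
`(1 - ab)R ≅ R/aR ≅ R/baR ≅ (1 - ba)R`. This isomorphism is realised by some `c` and `d` with
`dc = 1 - ab` and `cd = 1 - ba`. Then `b + c` is a unit with inverse `a + d`, and `a(b + c)a = a`.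
-/

universe u

open LinearMap Submodule MulOpposite

section

variable {R : Type*} [Ring R]

theorem IsIdempotentElem.mul_of_mul_mul_eq {a b : R} (h : a * b * a = a) :
    IsIdempotentElem (a * b) := by
  rw [IsIdempotentElem, ← mul_assoc, h]

theorem IsIdempotentElem.mul_of_mul_mul_eq' {a b : R} (h : a * b * a = a) :
    IsIdempotentElem (b * a) := by
  rw [IsIdempotentElem, mul_assoc, ← mul_assoc a, h]

theorem exists_mul_mul_eq_and_mul_mul_eq {a b : R} (h : a * b * a = a) :
    ∃ c : R, a * c * a = a ∧ c * a * c = c :=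
  ⟨b * a * b, by rw [show a * (b * a * b) * a = a * b * a * b * a by noncomm_ring, h, h],
    by rw [show b * a * b * a * (b * a * b) = b * (a * b * a * b * a) * b by noncomm_ring, h, h]⟩

theorem mem_span_singleton_op {x z : R} : z ∈ span Rᵐᵒᵖ {x} ↔ ∃ r : R, x * r = z := by
  rw [mem_span_singleton]
  exact ⟨fun ⟨r, hr⟩ ↦ ⟨r.unop, hr⟩, fun ⟨r, hr⟩ ↦ ⟨op r, hr⟩⟩

theorem range_mulLeft_op (x : R) : range (mulLeft Rᵐᵒᵖ x) = span Rᵐᵒᵖ {x} := by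
  ext z
  simp [mem_span_singleton_op]

theorem span_mul_eq_of_mul_mul_eq {x y r : R} (h : x * y * r = x) :
    span Rᵐᵒᵖ {x * y} = span Rᵐᵒᵖ {x} := by
  refine le_antisymm ?_ ?_ <;> rw [span_singleton_le_iff_mem, mem_span_singleton_op]
  exacts [⟨y, rfl⟩, ⟨r, h⟩]

theorem ker_mulLeft_mul_eq_of_mul_mul_eq {x y r : R} (h : r * x * y = y) :
    ker (mulLeft Rᵐᵒᵖ (x * y)) = ker (mulLeft Rᵐᵒᵖ y) := by
  ext z
  simp only [mem_ker, mulLeft_apply]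
  refine ⟨fun hz ↦ ?_, fun hz ↦ by rw [mul_assoc, hz, mul_zero]⟩
  rw [← h, mul_assoc, mul_assoc, ← mul_assoc x, hz, mul_zero]

theorem IsIdempotentElem.ker_mulLeft {e : R} (he : IsIdempotentElem e) :
    ker (mulLeft Rᵐᵒᵖ e) = span Rᵐᵒᵖ {1 - e} := by
  ext z
  simp only [mem_ker, mulLeft_apply, mem_span_singleton_op]
  refine ⟨fun hz ↦ ⟨z, by rw [sub_mul, one_mul, hz, sub_zero]⟩, ?_⟩
  rintro ⟨r, rfl⟩
  rw [← mul_assoc, he.mul_one_sub_self, zero_mul]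

noncomputable def spanSingletonEquivOfKerEq {x y : R}
    (h : ker (mulLeft Rᵐᵒᵖ x) = ker (mulLeft Rᵐᵒᵖ y)) :
    span Rᵐᵒᵖ {x} ≃ₗ[Rᵐᵒᵖ] span Rᵐᵒᵖ {y} :=
  (LinearEquiv.ofEq _ _ (range_mulLeft_op x)).symm ≪≫ₗ (quotKerEquivRange _).symm ≪≫ₗ
    quotEquivOfEq _ _ h ≪≫ₗ quotKerEquivRange _ ≪≫ₗ LinearEquiv.ofEq _ _ (range_mulLeft_op y)

noncomputable def quotSpanSingletonEquivKerOfMulUnitMul {a : R} (u : Rˣ) (h : a * u * a = a) :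
    (R ⧸ span Rᵐᵒᵖ {a}) ≃ₗ[Rᵐᵒᵖ] ker (mulLeft Rᵐᵒᵖ a) :=
  have hker : span Rᵐᵒᵖ {a} = ker (mulLeft Rᵐᵒᵖ (↑u * (1 - a * ↑u))) := by
    rw [ker_mulLeft_mul_eq_of_mul_mul_eq (r := ↑u⁻¹) (by simp),
      (IsIdempotentElem.mul_of_mul_mul_eq h).one_sub.ker_mulLeft, sub_sub_cancel,
      span_mul_eq_of_mul_mul_eq (r := ↑u⁻¹) (by simp)]
  have hrange : range (mulLeft Rᵐᵒᵖ (↑u * (1 - a * ↑u))) = ker (mulLeft Rᵐᵒᵖ a) := by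
    rw [show (u : R) * (1 - a * u) = (1 - u * a) * u by noncomm_ring, range_mulLeft_op,
      span_mul_eq_of_mul_mul_eq (r := ↑u⁻¹) (by simp),
      ← (IsIdempotentElem.mul_of_mul_mul_eq' h).ker_mulLeft,
      ker_mulLeft_mul_eq_of_mul_mul_eq (r := ↑u⁻¹) (by simp)]
  quotEquivOfEq _ _ hker ≪≫ₗ quotKerEquivRange _ ≪≫ₗ LinearEquiv.ofEq _ _ hrange

theorem IsIdempotentElem.coe_linearMap_apply {e : R} (he : IsIdempotentElem e)
    {N : Submodule Rᵐᵒᵖ R} (ψ : span Rᵐᵒᵖ {e} →ₗ[Rᵐᵒᵖ] N) (z : span Rᵐᵒᵖ {e}) :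
    (ψ z : R) = ψ ⟨e, mem_span_singleton_self e⟩ * z := by
  have hz : z = op (z : R) • ⟨e, mem_span_singleton_self e⟩ := by
    obtain ⟨r, hr⟩ := mem_span_singleton_op.1 z.2
    ext
    change (z : R) = e * z
    rw [← hr, ← mul_assoc, he.eq]
  conv_lhs => rw [hz, map_smul]
  rfl

theorem IsIdempotentElem.exists_mul_eq_of_linearEquiv {e f : R} (he : IsIdempotentElem e)
    (hf : IsIdempotentElem f) (φ : span Rᵐᵒᵖ {e} ≃ₗ[Rᵐᵒᵖ] span Rᵐᵒᵖ {f}) :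
    ∃ a b : R, b * a = e ∧ a * b = f ∧ a * e = a ∧ b * f = b := by
  refine ⟨φ ⟨e, mem_span_singleton_self e⟩, φ.symm ⟨f, mem_span_singleton_self f⟩, ?_, ?_, ?_, ?_⟩
  · simpa using (hf.coe_linearMap_apply φ.symm.toLinearMap (φ ⟨e, _⟩)).symm
  · simpa using (he.coe_linearMap_apply φ.toLinearMap (φ.symm ⟨f, _⟩)).symm
  · simpa using (he.coe_linearMap_apply φ.toLinearMap ⟨e, _⟩).symm
  · simpa using (hf.coe_linearMap_apply φ.symm.toLinearMap ⟨f, _⟩).symm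

noncomputable def IsIdempotentElem.quotSpanSingletonEquiv {e : R} (he : IsIdempotentElem e) :
    (R ⧸ span Rᵐᵒᵖ {e}) ≃ₗ[Rᵐᵒᵖ] span Rᵐᵒᵖ {1 - e} :=
  quotSpanSingletonEquivKerOfMulUnitMul 1 (by simpa using he.eq) ≪≫ₗ
    LinearEquiv.ofEq _ _ he.ker_mulLeft

theorem nonempty_quot_linearEquiv_of_unitRegular (hur : ∀ a : R, ∃ u : Rˣ, a * u * a = a)
    {e f : R} (he : IsIdempotentElem e) (hf : IsIdempotentElem f)
    (φ : span Rᵐᵒᵖ {e} ≃ₗ[Rᵐᵒᵖ] span Rᵐᵒᵖ {f}) :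
    Nonempty ((R ⧸ span Rᵐᵒᵖ {e}) ≃ₗ[Rᵐᵒᵖ] (R ⧸ span Rᵐᵒᵖ {f})) := by
  obtain ⟨a, b, hba, hab, hae, -⟩ := he.exists_mul_eq_of_linearEquiv hf φ
  obtain ⟨u, hu⟩ := hur a
  have haba : a * b * a = a := by rw [mul_assoc, hba, hae]
  have hker : span Rᵐᵒᵖ {1 - e} = ker (mulLeft Rᵐᵒᵖ a) := by
    rw [← he.ker_mulLeft, ← ker_mulLeft_mul_eq_of_mul_mul_eq (x := a) (r := b) (by rw [hba, he.eq]),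
      hae]
  have hspan : span Rᵐᵒᵖ {a} = span Rᵐᵒᵖ {f} := by
    rw [← hab, span_mul_eq_of_mul_mul_eq haba]
  exact ⟨he.quotSpanSingletonEquiv ≪≫ₗ LinearEquiv.ofEq _ _ hker ≪≫ₗ
    (quotSpanSingletonEquivKerOfMulUnitMul u hu).symm ≪≫ₗ quotEquivOfEq _ _ hspan⟩

theorem exists_unit_mul_mul_eq {a b c d : R} (hab : a * b * a = a) (hba : b * a * b = b)
    (hdc : d * c = 1 - a * b) (hcd : c * d = 1 - b * a)
    (hc : c * (1 - a * b) = c) (hd : d * (1 - b * a) = d) :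
    ∃ u : Rˣ, a * u * a = a := by
  have hca : c * a = 0 := by rw [← hc, mul_assoc, sub_mul, one_mul, hab, sub_self, mul_zero]
  have hdb : d * b = 0 := by rw [← hd, mul_assoc, sub_mul, one_mul, hba, sub_self, mul_zero]
  have hac : a * c = 0 := by
    have hc' : (1 - b * a) * c = c := by rw [← hcd, mul_assoc, hdc, hc]
    rw [← hc', ← mul_assoc, mul_sub, mul_one, ← mul_assoc, hab, sub_self, zero_mul]
  have hbd : b * d = 0 := by
    have hd' : (1 - a * b) * d = d := by rw [← hdc, mul_assoc, hcd, hd]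
    rw [← hd', ← mul_assoc, mul_sub, mul_one, ← mul_assoc, hba, sub_self, zero_mul]
  refine ⟨⟨b + c, a + d, ?_, ?_⟩, ?_⟩
  · simp only [add_mul, mul_add, hbd, hca, hcd, add_zero, zero_add, add_sub_cancel]
  · simp only [add_mul, mul_add, hac, hdb, hdc, add_zero, zero_add, add_sub_cancel]
  · simp only [mul_add, add_mul, hab, mul_assoc, hca, mul_zero, add_zero]

theorem exists_unit_of_quot_linearEquiv {a b : R} (hab : a * b * a = a) (hba : b * a * b = b)
    (Q : (R ⧸ span Rᵐᵒᵖ {a}) ≃ₗ[Rᵐᵒᵖ] (R ⧸ span Rᵐᵒᵖ {b * a})) :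
    ∃ u : Rˣ, a * u * a = a := by
  have he := IsIdempotentElem.mul_of_mul_mul_eq hab
  have hf := IsIdempotentElem.mul_of_mul_mul_eq' hab
  let τ : span Rᵐᵒᵖ {1 - a * b} ≃ₗ[Rᵐᵒᵖ] span Rᵐᵒᵖ {1 - b * a} :=
    he.quotSpanSingletonEquiv.symm ≪≫ₗ quotEquivOfEq _ _ (span_mul_eq_of_mul_mul_eq hab) ≪≫ₗ Q ≪≫ₗ
      hf.quotSpanSingletonEquiv
  obtain ⟨c, d, hdc, hcd, hc, hd⟩ := he.one_sub.exists_mul_eq_of_linearEquiv hf.one_sub τ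
  exact exists_unit_mul_mul_eq hab hba hdc hcd hc hd

end

/-- A von Neumann regular ring is unit-regular iff isomorphic principal right ideals have
isomorphic complements: `xR ≅ yR` implies `R/xR ≅ R/yR` (as right `R`-modules). -/
theorem unitRegular_iff_internal_cancellation (R : Type u) [Ring R]
    (hvnr : ∀ a : R, ∃ b : R, a * b * a = a) :
    (∀ a : R, ∃ u : Rˣ, a * u * a = a) ↔
      (∀ x y : R,
        Nonempty ((Submodule.span Rᵐᵒᵖ {x} : Submodule Rᵐᵒᵖ R) ≃ₗ[Rᵐᵒᵖ]
          (Submodule.span Rᵐᵒᵖ {y} : Submodule Rᵐᵒᵖ R)) →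
        Nonempty ((R ⧸ (Submodule.span Rᵐᵒᵖ {x} : Submodule Rᵐᵒᵖ R)) ≃ₗ[Rᵐᵒᵖ]
          (R ⧸ (Submodule.span Rᵐᵒᵖ {y} : Submodule Rᵐᵒᵖ R)))) := by
  constructor
  · rintro hur x y ⟨φ⟩
    obtain ⟨b, hb⟩ := hvnr x
    obtain ⟨c, hc⟩ := hvnr y
    have hx := span_mul_eq_of_mul_mul_eq hb
    have hy := span_mul_eq_of_mul_mul_eq hc
    obtain ⟨Q⟩ := nonempty_quot_linearEquiv_of_unitRegular hur
      (.mul_of_mul_mul_eq hb) (.mul_of_mul_mul_eq hc)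
      (LinearEquiv.ofEq _ _ hx ≪≫ₗ φ ≪≫ₗ LinearEquiv.ofEq _ _ hy.symm)
    exact ⟨quotEquivOfEq _ _ hx.symm ≪≫ₗ Q ≪≫ₗ quotEquivOfEq _ _ hy⟩
  · intro hcan a
    obtain ⟨b, hab, hba⟩ := exists_mul_mul_eq_and_mul_mul_eq (hvnr a).choose_spec
    obtain ⟨Q⟩ := hcan a (b * a)
      ⟨spanSingletonEquivOfKerEq (ker_mulLeft_mul_eq_of_mul_mul_eq hab).symm⟩
    exact exists_unit_of_quot_linearEquiv hab hba Q
end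

section
/- A unit-regular ring has stable range 1. -/
/-!
If `a * u * a = a` with `u` a unit, then `e = a * u` is an idempotent with `a = e * u⁻¹`, and
`(1 - e) * a = 0`. Multiplying `a * x + b * y = 1` on the left by `1 - e` gives
`(1 - e) * (b * y) = 1 - e`. For such `z = b * y` the Peirce decomposition with respect to `e`
gives `e + z * (1 - e) = 1 + e * z * (1 - e)`, and `e * z * (1 - e)` squares to zero, so this is a
unit; multiplying it on the right by `u⁻¹` yields `a + b * (y * (1 - e) * u⁻¹)`.
-/

section UnitRegular

variable {R : Type*} [Ring R]

theorem IsIdempotentElem.isUnit_add_mul_one_sub {e z : R} (he : IsIdempotentElem e)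
    (hz : (1 - e) * z = 1 - e) : IsUnit (e + z * (1 - e)) := by
  have hfe : (1 - e) * e = 0 := by rw [sub_mul, one_mul, he.eq, sub_self]
  have hnil : IsNilpotent (e * z * (1 - e)) :=
    ⟨2, by
      calc (e * z * (1 - e)) ^ 2 = e * z * ((1 - e) * e) * z * (1 - e) := by noncomm_ring
        _ = 0 := by rw [hfe]; noncomm_ring⟩
  have hpeirce : e + z * (1 - e) = 1 + e * z * (1 - e) :=
    calc e + z * (1 - e) = e + e * z * (1 - e) + (1 - e) * z * (1 - e) := by noncomm_ring
      _ = 1 + e * z * (1 - e) := by rw [hz, he.one_sub.eq]; abel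
  exact hpeirce ▸ hnil.isUnit_one_add

variable {a : R} {u : Rˣ}

theorem isIdempotentElem_mul_units_of_mul_mul_self (hu : a * u * a = a) :
    IsIdempotentElem (a * u) := by
  rw [IsIdempotentElem, ← mul_assoc, hu]

theorem one_sub_mul_units_mul_self_eq_zero (hu : a * u * a = a) : (1 - a * u) * a = 0 := by
  rw [sub_mul, one_mul, hu, sub_self]

theorem isUnit_add_mul_of_mul_units_mul_self {b x y : R} (hu : a * u * a = a)
    (hxy : a * x + b * y = 1) : IsUnit (a + b * (y * (1 - a * u) * ↑u⁻¹)) := by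
  have hby : (1 - a * u) * (b * y) = 1 - a * u := by
    calc (1 - a * u) * (b * y) = (1 - a * u) * (a * x + b * y) - (1 - a * u) * a * x := by
          noncomm_ring
      _ = 1 - a * u := by rw [hxy, one_sub_mul_units_mul_self_eq_zero hu]; noncomm_ring
  have hunit := (isIdempotentElem_mul_units_of_mul_mul_self hu).isUnit_add_mul_one_sub hby
  have hfactor : a + b * (y * (1 - a * u) * ↑u⁻¹) = (a * u + b * y * (1 - a * u)) * ↑u⁻¹ := by
    rw [add_mul, mul_assoc a, Units.mul_inv, mul_one]; noncomm_ring
  rw [hfactor]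
  exact hunit.mul u⁻¹.isUnit

end UnitRegular

/-- A unit-regular ring has stable range 1. -/
theorem unitRegular_stableRange1 (R : Type*) [Ring R]
    (h : ∀ a : R, ∃ u : Rˣ, a * u * a = a) :
    ∀ a b : R, (∃ x y : R, a * x + b * y = 1) → ∃ x : R, IsUnit (a + b * x) := by
  rintro a b ⟨x, y, hxy⟩
  obtain ⟨u, hu⟩ := h a
  exact ⟨_, isUnit_add_mul_of_mul_units_mul_self hu hxy⟩
end

section
/- If I is a left T-nilpotent left ideal of a ring R (for every sequence a₁, a₂, … in I there is n with a₁a₂⋯aₙ = 0), then IM ≠ M for every nonzero left R-module M. -/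
universe u

/-!
If `I • M = M`, every `r : R` that does not annihilate `M` can be extended to some `r * a`,
`a ∈ I`, that still does not annihilate `M`: otherwise `r` would kill every `a • y`, hence all of
`I • M = M`. Starting from `r = 1` and iterating gives a sequence in `I` none of whose
initial products vanish, contradicting `T`-nilpotence.
-/

theorem List.exists_seq_mem_forall_prod_range {M : Type*} [Monoid M] (S : Set M) {P : M → Prop}
    (h_one : P 1) (h_step : ∀ r, P r → ∃ a ∈ S, P (r * a)) :
    ∃ a : ℕ → M, (∀ n, a n ∈ S) ∧ ∀ n, P ((List.range n).map a).prod := by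
  choose next next_mem next_spec using h_step
  let prods : ℕ → {r // P r} :=
    fun n => Nat.rec ⟨1, h_one⟩ (fun _ r => ⟨r.1 * next r.1 r.2, next_spec r.1 r.2⟩) n
  let a n := next (prods n).1 (prods n).2
  refine ⟨a, fun n => next_mem (prods n).1 (prods n).2, fun n => ?_⟩
  suffices ((List.range n).map a).prod = (prods n).1 from this ▸ (prods n).2
  induction n with
  | zero => rfl
  | succ n ih => rw [List.prod_range_succ, ih]

theorem Submodule.exists_mem_smul_ne_zero_of_smul_top_eq_top {R M : Type*} [Ring R]
    [AddCommGroup M] [Module R M] {I : Ideal R} (h : I • (⊤ : Submodule R M) = ⊤)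
    {r : R} {x : M} (hx : r • x ≠ 0) : ∃ a ∈ I, ∃ y : M, (r * a) • y ≠ 0 := by
  by_contra! hr
  have hx_mem : x ∈ I • (⊤ : Submodule R M) := by rw [h]; exact Submodule.mem_top
  refine hx (Submodule.smul_induction_on hx_mem (fun a ha y _ => ?_) fun y z hy hz => ?_)
  · rw [smul_smul]; exact hr a ha y
  · rw [smul_add, hy, hz, add_zero]

/-- Bass's generalized Nakayama lemma: if `I` is a left `T`-nilpotent left ideal,
then `I M ≠ M` for every nonzero module `M`. -/
theorem tNilpotent_nakayama (R : Type u) [Ring R] (I : Ideal R)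
    (hT : ∀ a : ℕ → R, (∀ n, a n ∈ I) → ∃ n : ℕ, ((List.range (n + 1)).map a).prod = 0)
    (M : Type u) [AddCommGroup M] [Module R M] [Nontrivial M] :
    I • (⊤ : Submodule R M) ≠ ⊤ := by
  intro h
  obtain ⟨x, hx⟩ := exists_ne (0 : M)
  obtain ⟨a, ha, h_prod⟩ := List.exists_seq_mem_forall_prod_range (I : Set R)
    (P := fun r => ∃ y : M, r • y ≠ 0) ⟨x, by rwa [one_smul]⟩
    fun r ⟨y, hy⟩ => Submodule.exists_mem_smul_ne_zero_of_smul_top_eq_top h hy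
  obtain ⟨n, hn⟩ := hT a ha
  obtain ⟨y, hy⟩ := h_prod (n + 1)
  exact hy (by rw [hn, zero_smul])
end

section
/- If a ring R satisfies the Goodearl–Menal condition (B): for all a, b in R there exists a unit u with a − u and b − u⁻¹ both units, then R satisfies condition (A): whenever aR + bR = R there exists a unit u with a + bu a unit. -/
/-!
Condition (B) applied to `(x, a)` gives a unit `u₀` with `s = x - u₀` and `p = 1 - a u₀` units;
then `a s + b y = p`, so `a (s p⁻¹) + b (y p⁻¹) = 1` with `s p⁻¹` a unit. Once `a v + b y = 1`
with `v` a unit, condition (B) applied to `(-y, -b)` gives a unit `u` with `w = y + u` and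
`1 + b u` units, and `a + b (w v⁻¹) = (1 + b u) v⁻¹`.
-/

/-- The Goodearl–Menal condition (B). -/
def GoodearlMenalCondition (R : Type*) [Ring R] : Prop :=
  ∀ a b : R, ∃ u : Rˣ, IsUnit (a - u) ∧ IsUnit (b - (↑u⁻¹ : R))

section Ring

variable {R : Type*} [Ring R]

theorem isUnit_sub_units_inv_iff (a : R) (u : Rˣ) :
    IsUnit (a - ↑u⁻¹) ↔ IsUnit (1 - a * u) := by
  have h : (a - ↑u⁻¹) * u = -(1 - a * u) := by
    rw [sub_mul, Units.inv_mul]; noncomm_ring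
  rw [← Units.isUnit_mul_units _ u, h, IsUnit.neg_iff]

namespace GoodearlMenalCondition

theorem exists_units_mul_add_eq_one (hB : GoodearlMenalCondition R) {a b x y : R}
    (h : a * x + b * y = 1) : ∃ (v : Rˣ) (y' : R), a * v + b * y' = 1 := by
  obtain ⟨u₀, ⟨s, hs⟩, ha⟩ := hB x a
  obtain ⟨p, hp⟩ := (isUnit_sub_units_inv_iff a u₀).mp ha
  have hsp : a * s + b * y = p := by
    rw [hs, hp, mul_sub, sub_add_eq_add_sub, h]
  refine ⟨s * p⁻¹, y * ↑p⁻¹, ?_⟩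
  rw [Units.val_mul, ← mul_assoc, ← mul_assoc, ← add_mul, hsp, Units.mul_inv]

theorem exists_isUnit_add_mul_units (hB : GoodearlMenalCondition R) {a b y : R} (v : Rˣ)
    (h : a * v + b * y = 1) : ∃ u : Rˣ, IsUnit (a + b * u) := by
  obtain ⟨u, hy, hb⟩ := hB (-y) (-b)
  obtain ⟨w, hw⟩ : IsUnit (y + u) := by
    simpa [neg_sub_left, add_comm] using hy.neg
  have hbu : IsUnit (1 + b * u) := by
    simpa [sub_eq_add_neg] using (isUnit_sub_units_inv_iff (-b) u).mp hb
  have hw : a * v + b * w = 1 + b * u := by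
    rw [hw, mul_add, ← add_assoc, h]
  refine ⟨w * v⁻¹, ?_⟩
  have hfactor : a + b * ↑(w * v⁻¹) = (1 + b * u) * ↑v⁻¹ := by
    rw [← hw, add_mul, mul_assoc, Units.mul_inv, mul_one, Units.val_mul, mul_assoc]
  rw [hfactor]
  exact hbu.mul v⁻¹.isUnit

end GoodearlMenalCondition

end Ring

/-- Goodearl–Menal: condition (B) implies condition (A) (unit 1-stable range). -/
theorem goodearl_menal_B_implies_A (R : Type*) [Ring R]
    (hB : ∀ a b : R, ∃ u : Rˣ, IsUnit (a - u) ∧ IsUnit (b - (↑u⁻¹ : R))) :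
    ∀ a b : R, (∃ x y : R, a * x + b * y = 1) → ∃ u : Rˣ, IsUnit (a + b * u) := by
  have hB : GoodearlMenalCondition R := hB
  rintro a b ⟨x, y, h⟩
  obtain ⟨v, y', hv⟩ := hB.exists_units_mul_add_eq_one h
  exact hB.exists_isUnit_add_mul_units v hv
end
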